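/- Let T be a tree on n vertices and q ∈ R with q ≠ ±1. Then for 0 ≤ r ≤ n, the coefficients of the characteristic polynomials of ED_T and L^q_T satisfy c_{1^n,r}^{ED_T}(q) = (1-q^2)^{r-1} · c_{1^n,n-r}^{L^q_T}(q), where det(xI - M) = Σ_{r=0}^n (-1)^r c_{1^n,r}^M x^{n-r} for M ∈ {ED_T, L^q_T}. -/

import Mathlib

open Polynomial

noncomputable def qLap {n : ℕ} (G : SimpleGraph (Fin n)) [DecidableRel G.Adj]
    {R : Type*} [CommRing R] (q : R) : Matrix (Fin n) (Fin n) R :=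
  Matrix.of fun i j =>
    if i = j then 1 + q ^ 2 * ((G.degree i : R) - 1)
    else if G.Adj i j then -q else 0

noncomputable def expDist {n : ℕ} (G : SimpleGraph (Fin n))
    {R : Type*} [CommRing R] (q : R) : Matrix (Fin n) (Fin n) R :=
  Matrix.of fun i j => if i = j then 1 else q ^ G.dist i j

/-!
For a tree `T` write `E = ED_T`, `L = L^q_T` and `c = 1 - q²`. Two facts about trees carry the
proof.

* `E * L = c • 1`. Seen from a vertex `i`, every neighbour `k` of `j ≠ i` lies at distance
  `d(i,j) ± 1` from `i`, and exactly one of them is closer; so in `(E * L) i j` the neighbour sum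
  coming from `-q A` cancels the other terms unless `i = j`.
* `det L = c`. Rooting `T` at `r` and letting `P` be its parent matrix, one checks
  `L = (1 - q P)ᵀ (1 - q² e_r e_rᵀ) (1 - q P)`, and `1 - q P` is unitriangular once the vertices
  are ordered by depth.

Hence `E = c L⁻¹`, and the characteristic polynomial of an inverse is the reversed characteristic
polynomial, which relates the coefficient of `x^(n-r)` in `charpoly E` to that of `x^r` in
`charpoly L`.
-/

open Finset
open scoped Matrix

namespace Matrix
variable {n : Type*} [Fintype n] [DecidableEq n]

theorem charpolyRev_smul {R : Type*} [CommRing R] (a : R) (M : Matrix n n R) :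
    (a • M).charpolyRev = M.charpolyRev.comp (C a * X) := by
  rw [charpolyRev, charpolyRev, ← coe_compRingHom_apply, RingHom.map_det]
  congr 1
  ext i j : 1
  by_cases h : i = j <;> simp [h] <;> ring

theorem coeff_charpolyRev {R : Type*} [CommRing R] (M : Matrix n n R) {k : ℕ}
    (hk : k ≤ Fintype.card n) :
    M.charpolyRev.coeff k = M.charpoly.coeff (Fintype.card n - k) := by
  nontriviality R
  rw [← reverse_charpoly, coeff_reverse, charpoly_natDegree_eq_dim, revAt_le hk]

theorem det_mul_charpoly_coeff_of_mul_eq_smul_one {K : Type*} [Field K] {A B : Matrix n n K}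
    {c : K} (hc : c ≠ 0) (hAB : A * B = c • 1) {k : ℕ} (hk : k ≤ Fintype.card n) :
    B.det * ((-1) ^ k * A.charpoly.coeff (Fintype.card n - k))
      = c ^ k * ((-1) ^ (Fintype.card n - k) * B.charpoly.coeff k) := by
  have hB : B.det ≠ 0 := fun h0 =>
    pow_ne_zero _ hc (by simpa [h0] using (congrArg det hAB).symm)
  have hA : A = (c⁻¹ • B)⁻¹ := by
    refine (inv_eq_left_inv ?_).symm
    rw [Matrix.mul_smul, hAB, smul_smul, inv_mul_cancel₀ hc, one_smul]
  have hunit : IsUnit (c⁻¹ • B) := by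
    rw [isUnit_iff_isUnit_det, det_smul]
    exact (mul_ne_zero (pow_ne_zero _ (inv_ne_zero hc)) hB).isUnit
  have hpow {x : K} : x ^ Fintype.card n = x ^ (Fintype.card n - k) * x ^ k := by
    rw [← pow_add, Nat.sub_add_cancel hk]
  rw [hA, charpoly_inv _ hunit, ← C_1, ← C_neg, ← C_pow, ← C_mul, coeff_C_mul, charpolyRev_smul,
    comp_C_mul_X_coeff, coeff_charpolyRev _ (Nat.sub_le _ _), Nat.sub_sub_self hk, det_smul,
    Ring.inverse_eq_inv', hpow, hpow]
  simp only [inv_pow]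
  field_simp
  rw [← pow_mul, pow_mul', neg_one_sq, one_pow, one_mul]

theorem det_eq_prod_diag_of_forall_le {R α : Type*} [CommRing R] [LinearOrder α] {m : ℕ}
    (M : Matrix (Fin m) (Fin m) R) (f : Fin m → α)
    (h : ∀ i j, i ≠ j → f i ≤ f j → M i j = 0) : M.det = ∏ i, M i i := by
  set e := Tuple.sort f
  rw [← det_submatrix_equiv_self e, det_of_isLowerTriangular _ fun i j hij => ?_]
  · exact Equiv.prod_comp e fun i => M i i
  · exact h _ _ (e.injective.ne hij.ne') (Tuple.monotone_sort f hij.le)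

end Matrix

namespace SimpleGraph
variable {V : Type*} {G : SimpleGraph V}

theorem IsTree.length_eq_dist (hG : G.IsTree) {u v : V} {p : G.Walk u v} (hp : p.IsPath) :
    p.length = G.dist u v := by
  obtain ⟨p', hp', hlen⟩ := hG.connected.exists_path_of_dist u v
  rw [(hG.existsUnique_path u v).unique hp hp', hlen]

theorem IsTree.dist_eq_add_one_of_adj_of_notMem_support (hG : G.IsTree) {r u v : V}
    {p : G.Walk r u} (hp : p.IsPath) (hadj : G.Adj u v) (hv : v ∉ p.support) :
    G.dist r v = G.dist r u + 1 := by
  rw [← hG.length_eq_dist (hp.concat hv hadj), Walk.length_concat, hG.length_eq_dist hp]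

theorem IsTree.eq_penultimate_and_dist_add_one_of_adj_of_mem_support (hG : G.IsTree)
    {r u v : V} {p : G.Walk r u} (hp : p.IsPath) (hadj : G.Adj u v) (hv : v ∈ p.support) :
    v = p.penultimate ∧ G.dist r v + 1 = G.dist r u := by
  have hnil : ¬p.Nil := fun hnil => by
    have hvr : v = r := by simpa [Walk.nil_iff_support_eq.mp hnil] using hv
    exact hadj.ne (hvr.trans hnil.eq).symm
  have hpen : v = p.penultimate := hG.isAcyclic.eq_penultimate_of_adj_end hp hadj hv
  refine ⟨hpen, ?_⟩
  subst hpen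
  rw [← hG.length_eq_dist hp.dropLast, Walk.length_dropLast_add_one hnil, hG.length_eq_dist hp]

theorem IsTree.dist_add_one_eq_or_eq_add_one_of_adj (hG : G.IsTree) (r : V) {u v : V}
    (hadj : G.Adj u v) :
    G.dist r v + 1 = G.dist r u ∨ G.dist r v = G.dist r u + 1 := by
  obtain ⟨p, hp, -⟩ := hG.connected.exists_path_of_dist r u
  by_cases hv : v ∈ p.support
  · exact .inl (hG.eq_penultimate_and_dist_add_one_of_adj_of_mem_support hp hadj hv).2
  · exact .inr (hG.dist_eq_add_one_of_adj_of_notMem_support hp hadj hv)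

theorem IsTree.existsUnique_adj_dist_lt (hG : G.IsTree) {r u : V} (hu : u ≠ r) :
    ∃! v, G.Adj u v ∧ G.dist r v < G.dist r u := by
  obtain ⟨p, hp, -⟩ := hG.connected.exists_path_of_dist r u
  have hnil : ¬p.Nil := fun hnil => hu hnil.eq.symm
  have hmem : ∀ v, G.Adj u v → G.dist r v < G.dist r u → v ∈ p.support := fun v hadj hlt => by
    by_contra hv
    have := hG.dist_eq_add_one_of_adj_of_notMem_support hp hadj hv
    omega
  refine ⟨p.penultimate, ⟨(p.adj_penultimate hnil).symm, ?_⟩, fun v ⟨hadj, hlt⟩ => ?_⟩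
  · have := Walk.length_dropLast_add_one hnil
    rw [hG.length_eq_dist hp.dropLast, hG.length_eq_dist hp] at this
    omega
  · exact (hG.eq_penultimate_and_dist_add_one_of_adj_of_mem_support hp hadj (hmem v hadj hlt)).1

/-- In a tree, row `u ≠ r` has a single `1`, in the column of the parent of `u` in the tree
rooted at `r`, and row `r` vanishes. -/
noncomputable def parentMatrix (G : SimpleGraph V) [DecidableRel G.Adj] (R : Type*) [Zero R]
    [One R] (r : V) : Matrix V V R :=
  Matrix.of fun u v => if G.Adj u v ∧ G.dist r v < G.dist r u then 1 else 0

theorem IsTree.parentMatrix_add_transpose [DecidableRel G.Adj] {R : Type*} [NonAssocSemiring R]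
    (hG : G.IsTree) (r : V) :
    G.parentMatrix R r + (G.parentMatrix R r)ᵀ = G.adjMatrix R := by
  ext u v
  by_cases huv : G.Adj u v
  · rcases hG.dist_add_one_eq_or_eq_add_one_of_adj r huv with h | h
    · simp [parentMatrix, huv, huv.symm, show G.dist r v < G.dist r u by omega,
        show ¬G.dist r u < G.dist r v by omega]
    · simp [parentMatrix, huv, huv.symm, show ¬G.dist r v < G.dist r u by omega,
        show G.dist r u < G.dist r v by omega]
  · simp [parentMatrix, huv, G.adj_comm v u]

section Fintype
variable [Fintype V] [DecidableRel G.Adj]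

theorem IsTree.card_neighborFinset_filter_dist_lt [DecidableEq V] (hG : G.IsTree) (r u : V) :
    #{v ∈ G.neighborFinset u | G.dist r v < G.dist r u} = if u = r then 0 else 1 := by
  split_ifs with hu
  · simp [hu]
  · obtain ⟨v, hv, huniq⟩ := hG.existsUnique_adj_dist_lt hu
    refine Finset.card_eq_one.mpr ⟨v, Finset.ext fun w => ?_⟩
    simp only [Finset.mem_filter, mem_neighborFinset, Finset.mem_singleton]
    exact ⟨fun hw => huniq w hw, fun hw => hw ▸ hv⟩

theorem IsTree.neighborFinset_filter_not_dist_lt (hG : G.IsTree) (r u : V) :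
    {v ∈ G.neighborFinset u | ¬G.dist r v < G.dist r u}
      = {v ∈ G.neighborFinset u | G.dist r u < G.dist r v} := by
  refine Finset.filter_congr fun v hv => ?_
  rcases hG.dist_add_one_eq_or_eq_add_one_of_adj r ((mem_neighborFinset _ _ _).mp hv) with h | h
    <;> omega

theorem IsTree.card_neighborFinset_filter_dist_lt_add_card_filter_dist_gt (hG : G.IsTree)
    (r u : V) :
    #{v ∈ G.neighborFinset u | G.dist r v < G.dist r u}
      + #{v ∈ G.neighborFinset u | G.dist r u < G.dist r v} = G.degree u := by
  rw [← hG.neighborFinset_filter_not_dist_lt, Finset.card_filter_add_card_filter_not,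
    card_neighborFinset_eq_degree]

theorem IsTree.mul_sum_neighborFinset_pow_dist {R : Type*} [CommRing R] (hG : G.IsTree)
    (q : R) (i j : V) :
    q * ∑ k ∈ G.neighborFinset j, q ^ G.dist i k
      = q ^ G.dist i j * (#{k ∈ G.neighborFinset j | G.dist i k < G.dist i j}
          + #{k ∈ G.neighborFinset j | G.dist i j < G.dist i k} * q ^ 2) := by
  have hcloser : ∀ k ∈ {k ∈ G.neighborFinset j | G.dist i k < G.dist i j},
      q * q ^ G.dist i k = q ^ G.dist i j := fun k hk => by
    obtain ⟨hk, hlt⟩ := Finset.mem_filter.mp hk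
    rcases hG.dist_add_one_eq_or_eq_add_one_of_adj i ((mem_neighborFinset _ _ _).mp hk) with h | h
    · rw [← h]; ring
    · omega
  have hfarther : ∀ k ∈ {k ∈ G.neighborFinset j | G.dist i j < G.dist i k},
      q * q ^ G.dist i k = q ^ G.dist i j * q ^ 2 := fun k hk => by
    obtain ⟨hk, hlt⟩ := Finset.mem_filter.mp hk
    rcases hG.dist_add_one_eq_or_eq_add_one_of_adj i ((mem_neighborFinset _ _ _).mp hk) with h | h
    · omega
    · rw [h]; ring
  rw [← Finset.sum_filter_add_sum_filter_not _ (fun k => G.dist i k < G.dist i j),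
    hG.neighborFinset_filter_not_dist_lt, mul_add, Finset.mul_sum, Finset.mul_sum,
    Finset.sum_eq_card_nsmul hcloser, Finset.sum_eq_card_nsmul hfarther, nsmul_eq_mul,
    nsmul_eq_mul]
  ring

section ParentMatrix
variable [DecidableEq V] {R : Type*} [NonAssocSemiring R]

theorem IsTree.transpose_parentMatrix_mul_self (hG : G.IsTree) (r : V) :
    (G.parentMatrix R r)ᵀ * G.parentMatrix R r
      = Matrix.diagonal fun u => (#{v ∈ G.neighborFinset u | G.dist r u < G.dist r v} : R) := by
  ext u v
  simp only [Matrix.mul_apply, Matrix.transpose_apply, parentMatrix, Matrix.of_apply,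
    ite_zero_mul_ite_zero, mul_one]
  by_cases huv : u = v
  · subst huv
    rw [Matrix.diagonal_apply_eq, Finset.sum_boole, neighborFinset_eq_filter, Finset.filter_filter]
    simp only [and_self, G.adj_comm]
  · rw [Matrix.diagonal_apply_ne _ huv]
    refine Finset.sum_eq_zero fun w _ => if_neg fun ⟨⟨hwu, hu⟩, hwv, hv⟩ => huv ?_
    have hw : w ≠ r := by rintro rfl; simp at hu
    exact (hG.existsUnique_adj_dist_lt hw).unique ⟨hwu, hu⟩ ⟨hwv, hv⟩

theorem single_mul_parentMatrix (r : V) (a : R) :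
    Matrix.single r r a * G.parentMatrix R r = 0 := by
  ext u v
  by_cases hu : u = r
  · simp [hu, Matrix.single_mul_apply_same, parentMatrix]
  · simp [Matrix.single_mul_apply_of_ne, hu]

end ParentMatrix

end Fintype

end SimpleGraph

section Tree
open Matrix SimpleGraph
variable {n : ℕ} {G : SimpleGraph (Fin n)} {R : Type*} [CommRing R]

theorem expDist_apply (q : R) (i j : Fin n) : expDist G q i j = q ^ G.dist i j := by
  by_cases h : i = j <;> simp [expDist, h]

variable [DecidableRel G.Adj]

theorem qLap_eq (q : R) :
    qLap G q = 1 + q ^ 2 • diagonal (fun i => (G.degree i : R) - 1) - q • G.adjMatrix R := by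
  ext i j
  by_cases h : i = j
  · simp [qLap, h]
  · by_cases ha : G.Adj i j <;> simp [qLap, h, ha]

theorem SimpleGraph.IsTree.expDist_mul_qLap (hG : G.IsTree) (q : R) :
    expDist G q * qLap G q = (1 - q ^ 2) • 1 := by
  ext i j
  have hcard := hG.card_neighborFinset_filter_dist_lt_add_card_filter_dist_gt i j
  rw [qLap_eq, Matrix.mul_sub, Matrix.mul_add, Matrix.mul_one, Matrix.mul_smul, Matrix.mul_smul,
    Matrix.sub_apply, Matrix.add_apply, Matrix.smul_apply, Matrix.smul_apply, mul_diagonal,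
    mul_adjMatrix_apply, smul_eq_mul, smul_eq_mul]
  simp_rw [expDist_apply]
  rw [hG.mul_sum_neighborFinset_pow_dist, ← hcard, Nat.cast_add,
    hG.card_neighborFinset_filter_dist_lt]
  by_cases h : i = j
  · subst h
    simp only [dist_self, pow_zero, ↓reduceIte, Nat.cast_zero, zero_add, one_mul,
      Matrix.smul_apply, one_apply_eq, smul_eq_mul, mul_one]
    ring
  · simp only [h, Ne.symm h, ↓reduceIte, Nat.cast_one, add_sub_cancel_left, Matrix.smul_apply,
      ne_eq, not_false_eq_true, one_apply_ne, smul_eq_mul, mul_zero]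
    ring

theorem SimpleGraph.det_one_sub_smul_parentMatrix (r : Fin n) (q : R) :
    (1 - q • G.parentMatrix R r).det = 1 := by
  rw [det_eq_prod_diag_of_forall_le _ (G.dist r) fun u v huv hle => ?_]
  · simp [parentMatrix]
  · simp [parentMatrix, huv, not_lt.mpr hle]

theorem SimpleGraph.IsTree.qLap_eq_transpose_mul_mul (hG : G.IsTree) (r : Fin n) (q : R) :
    qLap G q = (1 - q • G.parentMatrix R r)ᵀ * (1 - q ^ 2 • single r r 1)
      * (1 - q • G.parentMatrix R r) := by
  have hEP := single_mul_parentMatrix (G := G) r (1 : R)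
  have hPE : (G.parentMatrix R r)ᵀ * single r r 1 = 0 := by
    rw [← transpose_single, ← transpose_mul, hEP, transpose_zero]
  have hdiag : diagonal (fun u => (#{v ∈ G.neighborFinset u | G.dist r u < G.dist r v} : R))
      = diagonal (fun u => (G.degree u : R) - 1) + single r r 1 := by
    rw [← diagonal_single, diagonal_add]
    congr 1
    ext u
    rw [← hG.card_neighborFinset_filter_dist_lt_add_card_filter_dist_gt r u, Nat.cast_add,
      hG.card_neighborFinset_filter_dist_lt]
    by_cases hu : u = r <;> simp [hu]
  rw [qLap_eq, ← hG.parentMatrix_add_transpose r, transpose_sub, transpose_one, transpose_smul]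
  simp only [Matrix.sub_mul, Matrix.mul_sub, Matrix.one_mul, Matrix.mul_one, Matrix.smul_mul,
    Matrix.mul_smul, hPE, hEP, smul_zero, sub_zero, hG.transpose_parentMatrix_mul_self, hdiag]
  module

theorem SimpleGraph.IsTree.det_qLap (hG : G.IsTree) (q : R) : (qLap G q).det = 1 - q ^ 2 := by
  obtain ⟨r⟩ := hG.connected.nonempty
  have hW : (1 - q ^ 2 • single r r (1 : R)).det = 1 - q ^ 2 := by
    rw [← diagonal_single, ← diagonal_one, ← diagonal_smul, diagonal_sub, det_diagonal,
      Finset.prod_eq_single r (fun u _ hu => by simp [hu]) (by simp)]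
    simp
  rw [hG.qLap_eq_transpose_mul_mul r q, det_mul, det_mul, det_transpose,
    det_one_sub_smul_parentMatrix, hW, one_mul, mul_one]

end Tree

/-- For a tree `T`, real `q ≠ ±1` and `0 ≤ r ≤ n`, the (signed) coefficients
`c_{1ⁿ,r}^M = (-1)^r [x^{n-r}] det(xI - M)` of the characteristic polynomials
satisfy `c_{1ⁿ,r}^{ED_T}(q) = (1 - q²)^(r-1) c_{1ⁿ,n-r}^{L^q_T}(q)`
(with `(1-q²)^(r-1)` interpreted as a `zpow`, so that `r = 0` is included). -/
theorem expDist_charpoly_coeff {n : ℕ} (G : SimpleGraph (Fin n)) [DecidableRel G.Adj]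
    (hG : G.IsTree) (q : ℝ) (h1 : q ≠ 1) (h2 : q ≠ -1) (r : ℕ) (hr : r ≤ n) :
    (-1 : ℝ) ^ r * (Matrix.charpoly (expDist G q)).coeff (n - r)
      = (1 - q ^ 2) ^ ((r : ℤ) - 1) *
          ((-1 : ℝ) ^ (n - r) * (Matrix.charpoly (qLap G q)).coeff r) := by
  have hc : (1 - q ^ 2 : ℝ) ≠ 0 := by
    rw [sub_ne_zero, ne_comm, Ne, sq_eq_one_iff]
    exact not_or.mpr ⟨h1, h2⟩
  have key := Matrix.det_mul_charpoly_coeff_of_mul_eq_smul_one hc (hG.expDist_mul_qLap q)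
    (k := r) (by simpa using hr)
  rw [hG.det_qLap, Fintype.card_fin] at key
  rw [zpow_sub_one₀ hc, zpow_natCast, mul_right_comm, ← key]
  field_simp
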